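/- Let n ≥ 1, λ > 0, τ > 0, let L0 = UΣVᵀ be a rank-r matrix with reduced SVD, T its tangent subspace, S0 a matrix with support subspace Ω, and Q a linear subspace of ℝ^{n×n}. Set γ = ‖P_{Ω^⊥}(L0 − S0)‖_∞ and δ = ‖P_Ω(L0 − S0)‖_F, and suppose τ ≥ max(8γ/λ, 8δ/λ). Suppose W^L, W^S, W^Q ∈ ℝ^{n×n} satisfy: P_T W^L = 0, P_{Q^⊥} W^L = 0, ‖W^L‖ < 1/4, ‖P_Ω(UVᵀ + W^L)‖_F < λ/4, ‖P_{Ω^⊥}(UVᵀ + W^L)‖_∞ < λ/4; P_T W^S = 0, P_{Q^⊥} W^S = 0, P_Ω W^S = λ·sgn(S0), ‖W^S‖ < 1/8, ‖P_{Ω^⊥} W^S‖_∞ < λ/8; P_T W^Q = 0, P_Ω W^Q = 0, P_{Q^⊥} W^Q = −P_{Q^⊥}(UVᵀ + (1/τ)L0), ‖W^Q‖ < 1/8, ‖P_{Ω^⊥} W^Q‖_∞ < λ/8. Then W := W^L + W^S + W^Q satisfies: P_T W = 0; ‖W‖ ≤ 5/8; P_{Q^⊥} W = −P_{Q^⊥}(UVᵀ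 + (1/τ)L0); ‖P_{Ω^⊥}(UVᵀ + W + (1/τ)L0 − (1/τ)S0)‖_∞ ≤ (5/8)λ; and ‖P_Ω(UVᵀ + W − λ·sgn(S0) + (1/τ)L0 − (1/τ)S0)‖_F ≤ (3/8)λ. -/

import Mathlib

open scoped BigOperators Matrix

abbrev Mat (n : ℕ) := Matrix (Fin n) (Fin n) ℝ

/-- Trace (Frobenius) inner product `⟨X, Y⟩ = trace (Xᵀ Y)`. -/
def finner {n : ℕ} (X Y : Mat n) : ℝ := ∑ i, ∑ j, X i j * Y i j

/-- Frobenius norm. -/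
noncomputable def fnorm {n : ℕ} (X : Mat n) : ℝ := Real.sqrt (finner X X)

/-- Entrywise ℓ¹ norm. -/
def l1Norm {n : ℕ} (X : Mat n) : ℝ := ∑ i, ∑ j, |X i j|

/-- Entrywise ℓ∞ norm. -/
noncomputable def linfNorm {n : ℕ} (X : Mat n) : ℝ := ⨆ p : Fin n × Fin n, |X p.1 p.2|

/-- Spectral (ℓ² operator) norm. -/
noncomputable def specNorm {n : ℕ} (X : Mat n) : ℝ := ‖Matrix.toEuclideanCLM (𝕜 := ℝ) X‖

/-- Nuclear norm: the sum of the singular values, i.e. of the square roots of the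
eigenvalues of `Xᵀ * X`. -/
noncomputable def nucNorm {n : ℕ} (X : Mat n) : ℝ :=
  ∑ i, Real.sqrt (((by simpa using Matrix.isHermitian_conjTranspose_mul_self X :
    (Xᵀ * X).IsHermitian)).eigenvalues i)

/-- Operator norm of a linear map on matrix space, w.r.t. the Frobenius norm:
`sup {‖A X‖_F : ‖X‖_F = 1}`. -/
noncomputable def opNorm {n : ℕ} (A : Mat n →ₗ[ℝ] Mat n) : ℝ :=
  sSup {c : ℝ | ∃ X : Mat n, fnorm X = 1 ∧ c = fnorm (A X)}

/-- `P` is the orthogonal projection onto the subspace `V` (w.r.t. the trace inner product). -/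
def IsOrthProj {n : ℕ} (V : Submodule ℝ (Mat n)) (P : Mat n →ₗ[ℝ] Mat n) : Prop :=
  (∀ X, P X ∈ V) ∧ (∀ X ∈ V, P X = X) ∧ (∀ X, ∀ Y ∈ V, finner (X - P X) Y = 0)

/-- Orthogonal complement of a subspace of matrix space w.r.t. the trace inner product. -/
def orthComp {n : ℕ} (V : Submodule ℝ (Mat n)) : Submodule ℝ (Mat n) where
  carrier := {X | ∀ Y ∈ V, finner X Y = 0}
  zero_mem' := by intro Y hY; simp [finner]
  add_mem' := by
    intro a b ha hb Y hY
    have h1 := ha Y hY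
    have h2 := hb Y hY
    simp only [finner, Matrix.add_apply, add_mul, Finset.sum_add_distrib] at *
    rw [h1, h2]; ring
  smul_mem' := by
    intro c a ha Y hY
    have h1 := ha Y hY
    simp only [finner, Matrix.smul_apply, smul_eq_mul, mul_assoc, ← Finset.mul_sum] at *
    rw [h1]; ring

/-- The tangent space `T = {U Xᵀ + Y Vᵀ}` associated with the reduced SVD `L₀ = U Σ Vᵀ`. -/
def tangentT {n r : ℕ} (U V : Matrix (Fin n) (Fin r) ℝ) : Submodule ℝ (Mat n) where
  carrier := {A | ∃ X Y : Matrix (Fin n) (Fin r) ℝ, A = U * Xᵀ + Y * Vᵀ}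
  zero_mem' := ⟨0, 0, by simp⟩
  add_mem' := by
    rintro a b ⟨X1, Y1, rfl⟩ ⟨X2, Y2, rfl⟩
    exact ⟨X1 + X2, Y1 + Y2, by rw [Matrix.transpose_add, Matrix.mul_add, Matrix.add_mul]; abel⟩
  smul_mem' := by
    rintro c a ⟨X1, Y1, rfl⟩
    exact ⟨c • X1, c • Y1,
      by rw [Matrix.transpose_smul, Matrix.mul_smul, Matrix.smul_mul, smul_add]⟩

/-- The support subspace `Ω` of `S₀`: matrices vanishing wherever `S₀` vanishes. -/
def suppSub {n : ℕ} (S0 : Mat n) : Submodule ℝ (Mat n) where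
  carrier := {X | ∀ i j, S0 i j = 0 → X i j = 0}
  zero_mem' := by intro i j _; rfl
  add_mem' := by
    intro a b ha hb i j h
    simp [Matrix.add_apply, ha i j h, hb i j h]
  smul_mem' := by
    intro c a ha i j h
    simp [Matrix.smul_apply, ha i j h]

/-- Entrywise sign matrix. -/
noncomputable def sgnMat {n : ℕ} (S : Mat n) : Mat n := Matrix.of fun i j => Real.sign (S i j)

section EntrywiseSupNorm

attribute [local instance] Matrix.seminormedAddCommGroup Matrix.normedSpace

theorem linfNorm_eq_norm {n : ℕ} (X : Mat n) : linfNorm X = ‖X‖ := by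
  refine le_antisymm (Real.iSup_le (fun _ => Matrix.norm_entry_le_entrywise_sup_norm X)
    (norm_nonneg _)) ?_
  refine (Matrix.norm_le_iff (Real.iSup_nonneg fun _ => abs_nonneg _)).2 fun i j => ?_
  exact le_ciSup (f := fun p : Fin n × Fin n => |X p.1 p.2|) (Set.finite_range _).bddAbove (i, j)

theorem linfNorm_add_le {n : ℕ} (X Y : Mat n) : linfNorm (X + Y) ≤ linfNorm X + linfNorm Y := by
  simpa only [linfNorm_eq_norm] using norm_add_le X Y

theorem linfNorm_smul {n : ℕ} (c : ℝ) (X : Mat n) : linfNorm (c • X) = |c| * linfNorm X := by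
  simp only [linfNorm_eq_norm, norm_smul, Real.norm_eq_abs]

end EntrywiseSupNorm

section FrobeniusNorm

attribute [local instance] Matrix.frobeniusSeminormedAddCommGroup Matrix.frobeniusNormedSpace

theorem fnorm_eq_norm {n : ℕ} (X : Mat n) : fnorm X = ‖X‖ := by
  rw [fnorm, finner, Matrix.frobenius_norm_def, Real.sqrt_eq_rpow]
  congr 1
  refine Finset.sum_congr rfl fun i _ => Finset.sum_congr rfl fun j _ => ?_
  rw [Real.norm_eq_abs, Real.rpow_two, sq_abs, sq]

theorem fnorm_add_le {n : ℕ} (X Y : Mat n) : fnorm (X + Y) ≤ fnorm X + fnorm Y := by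
  simpa only [fnorm_eq_norm] using norm_add_le X Y

theorem fnorm_smul {n : ℕ} (c : ℝ) (X : Mat n) : fnorm (c • X) = |c| * fnorm X := by
  simp only [fnorm_eq_norm, norm_smul, Real.norm_eq_abs]

end FrobeniusNorm

theorem specNorm_add_le {n : ℕ} (X Y : Mat n) : specNorm (X + Y) ≤ specNorm X + specNorm Y := by
  simpa only [specNorm, map_add] using norm_add_le _ _

theorem sgnMat_mem_suppSub {n : ℕ} (S : Mat n) : sgnMat S ∈ suppSub S := by
  intro i j h
  simp [sgnMat, h]

theorem one_div_mul_le_of_mul_div_le {a c lam τ : ℝ} (hc : 0 < c) (hlam : 0 < lam) (hτ : 0 < τ)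
    (h : c * a / lam ≤ τ) : 1 / τ * a ≤ lam / c := by
  rw [div_le_iff₀ hlam] at h
  rw [one_div_mul_eq_div, div_le_div_iff₀ hτ hc]
  linarith

theorem statement11_general {n r : ℕ} (lam τ : ℝ) (hlam : 0 < lam) (hτ : 0 < τ)
    (L0 S0 : Mat n) (U V : Matrix (Fin n) (Fin r) ℝ)
    (PT PΩ PΩperp PQperp : Mat n →ₗ[ℝ] Mat n)
    (hPΩ : IsOrthProj (suppSub S0) PΩ)
    (hτγ : 8 * linfNorm (PΩperp (L0 - S0)) / lam ≤ τ)
    (hτδ : 8 * fnorm (PΩ (L0 - S0)) / lam ≤ τ)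
    (WL WS WQ : Mat n)
    (hWL1 : PT WL = 0) (hWL2 : PQperp WL = 0) (hWL3 : specNorm WL < 1 / 4)
    (hWL4 : fnorm (PΩ (U * Vᵀ + WL)) < lam / 4)
    (hWL5 : linfNorm (PΩperp (U * Vᵀ + WL)) < lam / 4)
    (hWS1 : PT WS = 0) (hWS2 : PQperp WS = 0) (hWS3 : PΩ WS = lam • sgnMat S0)
    (hWS4 : specNorm WS < 1 / 8) (hWS5 : linfNorm (PΩperp WS) < lam / 8)
    (hWQ1 : PT WQ = 0) (hWQ2 : PΩ WQ = 0)
    (hWQ3 : PQperp WQ = -PQperp (U * Vᵀ + (1 / τ) • L0))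
    (hWQ4 : specNorm WQ < 1 / 8) (hWQ5 : linfNorm (PΩperp WQ) < lam / 8) :
    PT (WL + WS + WQ) = 0 ∧
    specNorm (WL + WS + WQ) ≤ 5 / 8 ∧
    PQperp (WL + WS + WQ) = -PQperp (U * Vᵀ + (1 / τ) • L0) ∧
    linfNorm (PΩperp (U * Vᵀ + (WL + WS + WQ) + (1 / τ) • L0 - (1 / τ) • S0)) ≤ 5 / 8 * lam ∧
    fnorm (PΩ (U * Vᵀ + (WL + WS + WQ) - lam • sgnMat S0 + (1 / τ) • L0 - (1 / τ) • S0)) ≤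
      3 / 8 * lam := by
  have hτ' : |1 / τ| = 1 / τ := abs_of_pos (one_div_pos.2 hτ)
  have hγ : linfNorm ((1 / τ) • PΩperp (L0 - S0)) ≤ lam / 8 := by
    rw [linfNorm_smul, hτ']
    exact one_div_mul_le_of_mul_div_le (by norm_num) hlam hτ hτγ
  have hδ : fnorm ((1 / τ) • PΩ (L0 - S0)) ≤ lam / 8 := by
    rw [fnorm_smul, hτ']
    exact one_div_mul_le_of_mul_div_le (by norm_num) hlam hτ hτδ
  have hsplit : U * Vᵀ + (WL + WS + WQ) + (1 / τ) • L0 - (1 / τ) • S0 =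
      (U * Vᵀ + WL) + WS + WQ + (1 / τ) • (L0 - S0) := by
    rw [smul_sub]; abel
  have hsgn : PΩ (lam • sgnMat S0) = lam • sgnMat S0 :=
    hPΩ.2.1 _ (Submodule.smul_mem _ _ (sgnMat_mem_suppSub S0))
  -- on `Ω` the sign term is cancelled by `P_Ω W^S`, and `P_Ω W^Q` vanishes
  have hΩ : PΩ (U * Vᵀ + (WL + WS + WQ) - lam • sgnMat S0 + (1 / τ) • L0 - (1 / τ) • S0) =
      PΩ (U * Vᵀ + WL) + (1 / τ) • PΩ (L0 - S0) := by
    rw [show U * Vᵀ + (WL + WS + WQ) - lam • sgnMat S0 + (1 / τ) • L0 - (1 / τ) • S0 =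
        U * Vᵀ + (WL + WS + WQ) + (1 / τ) • L0 - (1 / τ) • S0 - lam • sgnMat S0 by abel,
      hsplit, map_sub, map_add, map_add, map_add, map_smul, hWS3, hWQ2, hsgn]
    abel
  refine ⟨by simp [hWL1, hWS1, hWQ1], ?_, by simp [hWL2, hWS2, hWQ3], ?_, ?_⟩
  · linarith [specNorm_add_le (WL + WS) WQ, specNorm_add_le WL WS]
  · rw [hsplit, map_add, map_add, map_add, map_smul]
    linarith [linfNorm_add_le (PΩperp (U * Vᵀ + WL) + PΩperp WS + PΩperp WQ)
        ((1 / τ) • PΩperp (L0 - S0)),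
      linfNorm_add_le (PΩperp (U * Vᵀ + WL) + PΩperp WS) (PΩperp WQ),
      linfNorm_add_le (PΩperp (U * Vᵀ + WL)) (PΩperp WS)]
  · rw [hΩ]
    linarith [fnorm_add_le (PΩ (U * Vᵀ + WL)) ((1 / τ) • PΩ (L0 - S0))]

/-- Combining the dual certificates `W^L`, `W^S`, `W^Q`:
`W = W^L + W^S + W^Q` satisfies the conditions required in Theorem 3.1 with
`β = 5/8` and `α = 3/8`. -/
theorem statement11 {n r : ℕ} (hn : 1 ≤ n) (lam τ : ℝ) (hlam : 0 < lam) (hτ : 0 < τ)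
    (L0 S0 : Mat n) (U V : Matrix (Fin n) (Fin r) ℝ) (d : Fin r → ℝ)
    (hU : Uᵀ * U = 1) (hV : Vᵀ * V = 1) (hd : ∀ i, 0 < d i)
    (hL0 : L0 = U * Matrix.diagonal d * Vᵀ)
    (Q : Submodule ℝ (Mat n))
    (PT PΩ PΩperp PQperp : Mat n →ₗ[ℝ] Mat n)
    (hPT : IsOrthProj (tangentT U V) PT)
    (hPΩ : IsOrthProj (suppSub S0) PΩ)
    (hPΩperp : IsOrthProj (orthComp (suppSub S0)) PΩperp)
    (hPQperp : IsOrthProj (orthComp Q) PQperp)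
    (hτγ : 8 * linfNorm (PΩperp (L0 - S0)) / lam ≤ τ)
    (hτδ : 8 * fnorm (PΩ (L0 - S0)) / lam ≤ τ)
    (WL WS WQ : Mat n)
    (hWL1 : PT WL = 0) (hWL2 : PQperp WL = 0) (hWL3 : specNorm WL < 1 / 4)
    (hWL4 : fnorm (PΩ (U * Vᵀ + WL)) < lam / 4)
    (hWL5 : linfNorm (PΩperp (U * Vᵀ + WL)) < lam / 4)
    (hWS1 : PT WS = 0) (hWS2 : PQperp WS = 0) (hWS3 : PΩ WS = lam • sgnMat S0)
    (hWS4 : specNorm WS < 1 / 8) (hWS5 : linfNorm (PΩperp WS) < lam / 8)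
    (hWQ1 : PT WQ = 0) (hWQ2 : PΩ WQ = 0)
    (hWQ3 : PQperp WQ = -PQperp (U * Vᵀ + (1 / τ) • L0))
    (hWQ4 : specNorm WQ < 1 / 8) (hWQ5 : linfNorm (PΩperp WQ) < lam / 8) :
    PT (WL + WS + WQ) = 0 ∧
    specNorm (WL + WS + WQ) ≤ 5 / 8 ∧
    PQperp (WL + WS + WQ) = -PQperp (U * Vᵀ + (1 / τ) • L0) ∧
    linfNorm (PΩperp (U * Vᵀ + (WL + WS + WQ) + (1 / τ) • L0 - (1 / τ) • S0)) ≤ 5 / 8 * lam ∧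
    fnorm (PΩ (U * Vᵀ + (WL + WS + WQ) - lam • sgnMat S0 + (1 / τ) • L0 - (1 / τ) • S0)) ≤
      3 / 8 * lam :=
  statement11_general lam τ hlam hτ L0 S0 U V PT PΩ PΩperp PQperp hPΩ hτγ hτδ WL WS WQ hWL1 hWL2
    hWL3 hWL4 hWL5 hWS1 hWS2 hWS3 hWS4 hWS5 hWQ1 hWQ2 hWQ3 hWQ4 hWQ5
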